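/- arXiv:1507.00168 — 6 statements merged into one kernel-verified Lean document; each statement's English description precedes it below -/
import Mathlib

section
/- Let G and G' be groups and let φ : G → G' be a bijection such that for all x, y ∈ G, either φ(xy) = φ(x)φ(y) or φ(xy) = φ(y)φ(x). Then φ is either an isomorphism or an anti-isomorphism (i.e., either φ(xy) = φ(x)φ(y) for all x, y, or φ(xy) = φ(y)φ(x) for all x, y). -/
/-!
Fix `x` and suppose `φ (x * y) = φ x * φ y ≠ φ y * φ x` and `φ (x * z) = φ z * φ x ≠ φ x * φ z`.
Evaluating `φ (y * x * z)` through `(y * x) * z` and `y * (x * z)` leaves two possibilities: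
either `φ y` and `φ z` commute, or `φ y * φ x * φ z = φ z * φ x * φ y`. The first is refuted by
expanding `φ (x * y * z)`, the second by expanding `φ (x * (y * x * z)) = φ (x * y * (x * z))`;
both use injectivity and the fact that `φ` sends commuting pairs to commuting pairs.
So every `x` is multiplicative on the left for all `y`, or anti-multiplicative for all `y`.
If points `x` and `z` of both kinds existed, whichever kind `x * z` has would contradict one of them.
-/

def IsHalfHom {M N : Type*} [Mul M] [Mul N] (φ : M → N) : Prop :=
  ∀ x y, φ (x * y) = φ x * φ y ∨ φ (x * y) = φ y * φ x

namespace IsHalfHom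

variable {M N : Type*} [Semigroup M] [Semigroup N] [IsCancelMul N] {φ : M → N}

theorem commute_map_of_map_mul (hφ : IsHalfHom φ) {a b : M} (hab : Commute a b)
    (h : φ (a * b) = φ a * φ b) : Commute (φ a) (φ b) := by
  by_contra hne
  -- compare `a * (a * b)` with `(a * a) * b`, then `(a * b) * (a * b)` with `(a * a * b) * b`
  have hne : φ a * φ b ≠ φ b * φ a := hne
  have haa : φ (a * a) = φ a * φ a := (hφ a a).elim id id
  have haab : φ (a * a * b) = φ a * φ a * φ b := by
    rcases hφ a (a * b) with h₁ | h₁ <;> rw [← mul_assoc, h] at h₁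
    · rw [h₁, mul_assoc]
    · rcases hφ (a * a) b with h₂ | h₂ <;> rw [haa, h₁] at h₂
      · exact absurd (mul_left_cancel (by simpa only [mul_assoc] using h₂)) hne.symm
      · exact absurd (mul_right_cancel (by simpa only [← mul_assoc] using h₂)) hne
  have habab : a * b * (a * b) = a * a * b * b := by
    rw [mul_assoc a b, ← mul_assoc b, ← hab.eq]
    simp only [mul_assoc]
  have hsq : φ (a * b * (a * b)) = φ a * φ b * (φ a * φ b) := by
    rw [(hφ _ _).elim id id, h]
  rcases hφ (a * a * b) b with h₃ | h₃ <;> rw [← habab, hsq, haab] at h₃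
  · refine hne (mul_right_cancel (b := φ b) (mul_left_cancel (a := φ a) ?_)).symm
    simpa only [mul_assoc] using h₃
  · refine hne (mul_right_cancel (b := φ a) (mul_right_cancel (b := φ b) ?_))
    simpa only [← mul_assoc] using h₃

theorem commute_map (hφ : IsHalfHom φ) {a b : M} (hab : Commute a b) :
    Commute (φ a) (φ b) := by
  rcases hφ a b with h | h
  · exact hφ.commute_map_of_map_mul hab h
  · exact (hφ.commute_map_of_map_mul hab.symm (hab.eq ▸ h)).symm

theorem map_mul_ne_map_mul_swap (hφ : IsHalfHom φ) (hinj : Function.Injective φ) {a b : M}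
    (h : ¬Commute (φ a) (φ b)) : φ (a * b) ≠ φ (b * a) :=
  fun hab => h (hφ.commute_map (hinj hab))

theorem map_mul_mul_ne_of_commute [IsRightCancelMul M] (hφ : IsHalfHom φ)
    (hinj : Function.Injective φ) {x y z : M}
    (hxy : φ (x * y) = φ x * φ y) (hy : ¬Commute (φ x) (φ y))
    (hzx : φ (z * x) = φ x * φ z) (hz : ¬Commute (φ x) (φ z))
    (hyz : Commute (φ y) (φ z)) : φ (y * x * z) ≠ φ z * (φ y * φ x) := by
  have hyz' : φ (y * z) = φ y * φ z := (hφ y z).elim id (·.trans hyz.eq.symm)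
  have hxyz : φ (x * y * z) = φ x * φ y * φ z := by
    rcases hφ x (y * z) with h₁ | h₁ <;> rw [← mul_assoc, hyz'] at h₁
    · rw [h₁, mul_assoc]
    · rcases hφ (x * y) z with h₂ | h₂ <;> rw [hxy] at h₂
      · exact h₂
      · refine absurd (mul_left_cancel (a := φ z) ?_) hy
        rw [← h₂, h₁, hyz.eq, mul_assoc]
  have hx_yz : Commute (φ x) (φ y * φ z) := by
    rcases hφ (y * z) x with h₁ | h₁ <;> rw [hyz'] at h₁
    · rcases hφ y (z * x) with h₂ | h₂ <;> rw [← mul_assoc, hzx, h₁] at h₂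
      · exact absurd (show Commute (φ z) (φ x) from
          mul_left_cancel (a := φ y) (by rwa [mul_assoc] at h₂)).symm hz
      · show φ x * (φ y * φ z) = φ y * φ z * φ x
        rw [h₂, mul_assoc, hyz.eq]
    · have : y * z * x = x * (y * z) := hinj (by rw [h₁, ← mul_assoc, ← hxyz, mul_assoc])
      simpa only [hyz'] using hφ.commute_map this.symm
  intro h
  have : y * x * z = x * y * z := hinj (by
    rw [h, hxyz, ← mul_assoc, ← hyz.eq, ← hx_yz.eq, mul_assoc])
  exact hy (hφ.commute_map (mul_right_cancel this).symm)

theorem map_mul_mul_ne_of_map_mul_mul (hφ : IsHalfHom φ) {x y z : M}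
    (hxy : φ (x * y) = φ x * φ y) (hy : ¬Commute (φ x) (φ y))
    (hxz : φ (x * z) = φ z * φ x) (hz : ¬Commute (φ x) (φ z))
    (hyxz : φ (y * x * z) = φ y * φ x * φ z) : φ y * φ x * φ z ≠ φ z * φ x * φ y := by
  intro hA
  have hmid : x * (y * x * z) = x * y * (x * z) := by simp only [mul_assoc]
  rcases hφ x (y * x * z) with h₁ | h₁ <;> rcases hφ (x * y) (x * z) with h₂ | h₂ <;>
    rw [hyxz] at h₁ <;> rw [← hmid, hxy, hxz] at h₂ <;> have h := h₁.symm.trans h₂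
  · simp only [mul_assoc, mul_right_inj] at h
    exact hz h
  · rw [hA] at h
    simp only [← mul_assoc, mul_left_inj] at h
    exact hz h
  · simp only [← mul_assoc, mul_left_inj] at h
    exact hy h.symm
  · rw [hA] at h
    simp only [mul_assoc, mul_right_inj] at h
    exact hy h.symm

theorem forall_map_mul_or_forall_map_mul_swap [IsRightCancelMul M] (hφ : IsHalfHom φ)
    (hinj : Function.Injective φ) (x : M) :
    (∀ y, φ (x * y) = φ x * φ y) ∨ (∀ y, φ (x * y) = φ y * φ x) := by
  by_contra! ⟨⟨z, hz'⟩, ⟨y, hy'⟩⟩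
  have hxy := (hφ x y).resolve_right hy'
  have hxz := (hφ x z).resolve_left hz'
  have hy : ¬Commute (φ x) (φ y) := fun h => hy' (hxy.trans h.eq)
  have hz : ¬Commute (φ x) (φ z) := fun h => hz' (hxz.trans h.eq.symm)
  have hyx : φ (y * x) = φ y * φ x := (hφ y x).resolve_right
    fun h => hφ.map_mul_ne_map_mul_swap hinj hy (hxy.trans h.symm)
  have hzx : φ (z * x) = φ x * φ z := (hφ z x).resolve_left
    fun h => hφ.map_mul_ne_map_mul_swap hinj hz (hxz.trans h.symm)
  rcases hφ (y * x) z with h₁ | h₁ <;> rcases hφ y (x * z) with h₂ | h₂ <;>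
    rw [hyx] at h₁ <;> rw [← mul_assoc, hxz, h₁] at h₂
  · simp only [mul_assoc, mul_right_inj] at h₂
    exact hz h₂
  · exact hφ.map_mul_mul_ne_of_map_mul_mul hxy hy hxz hz h₁ h₂
  · simp only [← mul_assoc, mul_left_inj] at h₂
    exact hφ.map_mul_mul_ne_of_commute hinj hxy hy hzx hz h₂.symm h₁
  · simp only [mul_assoc, mul_right_inj] at h₂
    exact hy h₂.symm

theorem forall₂_map_mul_or_forall₂_map_mul_swap [IsRightCancelMul M] (hφ : IsHalfHom φ)
    (hinj : Function.Injective φ) :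
    (∀ x y, φ (x * y) = φ x * φ y) ∨ (∀ x y, φ (x * y) = φ y * φ x) := by
  by_contra! ⟨⟨z, c, hzc⟩, ⟨x, d, hxd⟩⟩
  have hz : ∀ y, φ (z * y) = φ y * φ z :=
    (hφ.forall_map_mul_or_forall_map_mul_swap hinj z).resolve_left fun h => hzc (h c)
  have hx : ∀ y, φ (x * y) = φ x * φ y :=
    (hφ.forall_map_mul_or_forall_map_mul_swap hinj x).resolve_right fun h => hxd (h d)
  rcases hφ.forall_map_mul_or_forall_map_mul_swap hinj (x * z) with hxz | hxz
  · refine hzc ((hz c).trans (mul_left_cancel (a := φ x) ?_))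
    rw [← hz, ← hx, ← mul_assoc, hxz, hx, mul_assoc]
  · refine hxd ((hx d).trans (mul_right_cancel (b := φ z) ?_))
    rw [mul_assoc, ← hz, ← hx, ← mul_assoc, hxz, hx, mul_assoc]

end IsHalfHom

theorem stmt_0 {G G' : Type*} [Group G] [Group G'] (φ : G → G')
    (hbij : Function.Bijective φ)
    (hhalf : ∀ x y : G, φ (x * y) = φ x * φ y ∨ φ (x * y) = φ y * φ x) :
    (∀ x y : G, φ (x * y) = φ x * φ y) ∨ (∀ x y : G, φ (x * y) = φ y * φ x) :=
  IsHalfHom.forall₂_map_mul_or_forall₂_map_mul_swap hhalf hbij.injective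
end

section
/- Let φ : G → G' be a half-isomorphism of groups and x, y ∈ G. If φ(xy) = φ(x)φ(y), then φ(yx) = φ(y)φ(x). -/
/-!
If `x` and `y` commute, then `φ x` and `φ y` commute: with `a = φ x`, `b = φ y` and
`φ (x * y) = a * b`, comparing the two factorizations of `x * (x * y)` forces
`φ (x * x * y) = a * a * b` unless `a` and `b` commute, and then comparing
`(x * y) * (x * y) = (x * x * y) * y` forces `a * b = b * a`.
The theorem follows: in the bad case `φ (y * x) = φ x * φ y = φ (x * y)`,
so `x` and `y` commute by injectivity.
-/

section HalfHom

variable {G G' : Type*} [Group G] [Group G'] {φ : G → G'}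
  (hφ : ∀ x y : G, φ (x * y) = φ x * φ y ∨ φ (x * y) = φ y * φ x)
include hφ

theorem map_mul_self_of_half (x : G) : φ (x * x) = φ x * φ x :=
  (hφ x x).elim id id

theorem map_mul_mul_self_of_half {x y : G} (h : φ (x * y) = φ x * φ y) :
    φ (x * x * y) = φ x * φ x * φ y ∨ Commute (φ x) (φ y) := by
  rcases hφ (x * x) y with h₁ | h₁ <;>
    rcases hφ x (x * y) with h₂ | h₂ <;>
    rw [map_mul_self_of_half hφ] at h₁ <;> rw [h, ← mul_assoc] at h₂
  · exact .inl h₁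
  · exact .inl h₁
  · exact .inl (by rw [h₂, mul_assoc])
  · exact .inr (mul_right_cancel ((h₂.symm.trans h₁).trans (mul_assoc _ _ _).symm))

theorem commute_map_of_map_mul_eq {x y : G} (hxy : Commute x y)
    (h : φ (x * y) = φ x * φ y) : Commute (φ x) (φ y) := by
  rcases map_mul_mul_self_of_half hφ h with hxxy | hab
  · have hsq : φ (x * x * y * y) = φ x * φ y * (φ x * φ y) := by
      rw [show x * x * y * y = x * y * (x * y) by
        rw [← mul_assoc, mul_assoc x y x, ← hxy.eq, ← mul_assoc]]
      rw [map_mul_self_of_half hφ, h]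
    rcases hφ (x * x * y) y with h₃ | h₃ <;> rw [hsq, hxxy] at h₃
    · exact mul_left_cancel (mul_right_cancel (by simpa only [mul_assoc] using h₃.symm))
    · exact mul_right_cancel (mul_right_cancel (by simpa only [mul_assoc] using h₃))
  · exact hab

theorem Commute.map_of_half {x y : G} (hxy : Commute x y) : Commute (φ x) (φ y) := by
  rcases hφ x y with h | h
  · exact commute_map_of_map_mul_eq hφ hxy h
  · exact (commute_map_of_map_mul_eq hφ hxy.symm (hxy.eq ▸ h)).symm

end HalfHom

theorem stmt_2 {G G' : Type*} [Group G] [Group G'] (φ : G → G')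
    (hbij : Function.Bijective φ)
    (hhalf : ∀ x y : G, φ (x * y) = φ x * φ y ∨ φ (x * y) = φ y * φ x)
    (x y : G) (h : φ (x * y) = φ x * φ y) :
    φ (y * x) = φ y * φ x := by
  rcases hhalf y x with hyx | hyx
  · exact hyx
  · have hxy : Commute x y := (hbij.1 (hyx.trans h.symm)).symm
    rw [hyx]
    exact (hxy.map_of_half hhalf).eq
end

section
/- Let φ : G → G' be a half-isomorphism of groups and a, b ∈ G. If φ(ab) = φ(a)φ(b), then the restriction of φ to the subgroup ⟨a, b⟩ generated by a and b is an isomorphism onto its image. -/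
section ScottHalf

variable {G G' : Type*} [Group G] [Group G'] {φ : G → G'}

private lemma scott_one
    (hhalf : ∀ x y : G, φ (x * y) = φ x * φ y ∨ φ (x * y) = φ y * φ x) :
    φ (1 : G) = 1 := by
  rcases hhalf 1 1 with h | h <;>
  · rw [one_mul] at h
    exact right_eq_mul.mp h

private lemma scott_inv
    (hhalf : ∀ x y : G, φ (x * y) = φ x * φ y ∨ φ (x * y) = φ y * φ x)
    (x : G) : φ x⁻¹ = (φ x)⁻¹ := by
  rcases hhalf x x⁻¹ with h | h <;> rw [mul_inv_cancel, scott_one hhalf] at h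
  · exact eq_inv_of_mul_eq_one_right h.symm
  · exact eq_inv_of_mul_eq_one_left h.symm

/-- If `x, y` commute and `φ (x*y) = φ x * φ y`, then the images commute. -/
private lemma scott_comm_aux
    (hhalf : ∀ x y : G, φ (x * y) = φ x * φ y ∨ φ (x * y) = φ y * φ x)
    {x y : G} (hc : x * y = y * x) (hxy : φ (x * y) = φ x * φ y) :
    φ x * φ y = φ y * φ x := by
  have hyy : φ (y * y) = φ y * φ y := (hhalf y y).elim id id
  rcases hhalf (x * y) y with h1 | h1
  · -- h1 : φ ((x*y)*y) = φ (x*y) * φ y = (φx*φy)*φy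
    rw [hxy] at h1
    have hel : (x * y) * (x * y) = x * ((x * y) * y) := by
      rw [mul_assoc x y (x * y), ← mul_assoc y x y, ← hc]
    have hs : φ (x * ((x * y) * y)) = (φ x * φ y) * (φ x * φ y) := by
      rw [← hel]
      rcases hhalf (x * y) (x * y) with h | h <;> rw [h, hxy]
    rcases hhalf x ((x * y) * y) with h2 | h2 <;> rw [h1] at h2 <;> rw [hs] at h2
    · -- h2 : (φx*φy)*(φx*φy) = φ x * ((φx*φy)*φy)
      simp only [mul_assoc] at h2
      have h4 := mul_left_cancel h2
      -- h4 : φy*(φx*φy) = φx*(φy*φy)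
      simp only [← mul_assoc] at h4
      exact (mul_right_cancel h4).symm
    · -- h2 : (φx*φy)*(φx*φy) = ((φx*φy)*φy)*φx
      have h3 : (φ x * φ y) * (φ x * φ y) = (φ x * φ y) * (φ y * φ x) := by
        rw [h2, mul_assoc]
      exact mul_left_cancel h3
  · -- h1 : φ ((x*y)*y) = φ y * φ (x*y) = φy*(φx*φy)
    rw [hxy] at h1
    rcases hhalf x (y * y) with h2 | h2 <;> rw [hyy, ← mul_assoc x y y] at h2
    · -- h2 : φ((x*y)*y) = φ x * (φy*φy)
      have h3 := h1.symm.trans h2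
      simp only [← mul_assoc] at h3
      exact (mul_right_cancel h3).symm
    · -- h2 : φ((x*y)*y) = (φy*φy)*φx
      have h3 := h1.symm.trans h2
      -- φy*(φx*φy) = (φy*φy)*φx
      rw [mul_assoc] at h3
      exact mul_left_cancel h3

/-- Commuting elements have commuting images. -/
private lemma scott_comm
    (hhalf : ∀ x y : G, φ (x * y) = φ x * φ y ∨ φ (x * y) = φ y * φ x)
    {x y : G} (hc : x * y = y * x) : φ x * φ y = φ y * φ x := by
  rcases hhalf x y with h | h
  · exact scott_comm_aux hhalf hc h
  · have hyx : φ (y * x) = φ y * φ x := by rw [← hc]; exact h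
    exact (scott_comm_aux hhalf hc.symm hyx).symm

private lemma scott_swapH (hinj : Function.Injective φ)
    (hhalf : ∀ x y : G, φ (x * y) = φ x * φ y ∨ φ (x * y) = φ y * φ x)
    {x y : G} (h : φ (x * y) = φ x * φ y) : φ (y * x) = φ y * φ x := by
  rcases hhalf y x with h' | h'
  · exact h'
  · have hc : y * x = x * y := hinj (h'.trans h.symm)
    rw [h']
    exact scott_comm hhalf hc.symm

private lemma scott_swapA (hinj : Function.Injective φ)
    (hhalf : ∀ x y : G, φ (x * y) = φ x * φ y ∨ φ (x * y) = φ y * φ x)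
    {x y : G} (h : φ (x * y) = φ y * φ x) : φ (y * x) = φ x * φ y := by
  rcases hhalf y x with h' | h'
  · have hc : y * x = x * y := hinj (h'.trans h.symm)
    rw [h']
    exact (scott_comm hhalf hc.symm).symm
  · exact h'

/-- Auxiliary step for the `aba` lemma. -/
private lemma scott_aba_aux (hinj : Function.Injective φ)
    (hhalf : ∀ x y : G, φ (x * y) = φ x * φ y ∨ φ (x * y) = φ y * φ x)
    (p q : G) (hA : φ (p * (q * p)) = (φ q * φ p) * φ p)
    (hB : φ (p * (q * p)) = φ p * (φ p * φ q)) :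
    φ (p * (q * p)) = φ p * (φ q * φ p) := by
  have hpp : φ (p * p) = φ p * φ p := (hhalf p p).elim id id
  have hkey : φ ((p * p) * q) = φ (p * (q * p)) := by
    rcases hhalf (p * p) q with h3 | h3
    · rw [h3, hpp, hB, mul_assoc]
    · rw [h3, hpp, hA, ← mul_assoc]
  have he : p * (p * q) = p * (q * p) := by
    have := hinj hkey
    rwa [mul_assoc] at this
  have hc2 : p * q = q * p := mul_left_cancel he
  rw [hB, scott_comm hhalf hc2]

/-- Scott's lemma: `φ (p*q*p) = φ p * φ q * φ p`. -/
private lemma scott_aba (hinj : Function.Injective φ)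
    (hhalf : ∀ x y : G, φ (x * y) = φ x * φ y ∨ φ (x * y) = φ y * φ x)
    (p q : G) : φ (p * (q * p)) = φ p * (φ q * φ p) := by
  have hassoc : p * (q * p) = (p * q) * p := (mul_assoc p q p).symm
  rcases hhalf p q with hm | hm
  · have hn : φ (q * p) = φ q * φ p := scott_swapH hinj hhalf hm
    rcases hhalf p (q * p) with h2 | h2
    · rw [h2, hn]
    · -- h2 : φ (p*(q*p)) = φ(q*p)*φp = (φq*φp)*φp
      rw [hn] at h2
      rcases hhalf (p * q) p with h1 | h1
      · rw [hassoc, h1, hm, mul_assoc]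
      · -- h1 : φ((p*q)*p) = φp*φ(p*q) = φp*(φp*φq)
        rw [hm] at h1
        rw [← hassoc] at h1
        exact scott_aba_aux hinj hhalf p q h2 h1
  · have hn : φ (q * p) = φ p * φ q := scott_swapA hinj hhalf hm
    rcases hhalf p (q * p) with h2 | h2
    · -- h2 : φ (p*(q*p)) = φp*φ(q*p) = φp*(φp*φq)
      rw [hn] at h2
      rcases hhalf (p * q) p with h1 | h1
      · -- h1 : φ((p*q)*p) = φ(p*q)*φp = (φq*φp)*φp
        rw [hm] at h1
        rw [← hassoc] at h1
        exact scott_aba_aux hinj hhalf p q h1 h2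
      · -- h1 : φ((p*q)*p) = φp*φ(p*q) = φp*(φq*φp)
        rw [hassoc, h1, hm]
    · -- h2 : φ (p*(q*p)) = φ(q*p)*φp = (φp*φq)*φp
      rw [h2, hn, mul_assoc]

/-- If `φ (g*x) = φ g * φ x` then `φ (g⁻¹*x) = φ g⁻¹ * φ x`. -/
private lemma scott_invL (hinj : Function.Injective φ)
    (hhalf : ∀ x y : G, φ (x * y) = φ x * φ y ∨ φ (x * y) = φ y * φ x)
    {g x : G} (h : φ (g * x) = φ g * φ x) : φ (g⁻¹ * x) = φ g⁻¹ * φ x := by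
  have l1 := scott_aba hinj hhalf g⁻¹ (g * x)
  have hel : g⁻¹ * ((g * x) * g⁻¹) = x * g⁻¹ := by group
  rw [hel, h] at l1
  have l2 : φ (x * g⁻¹) = φ x * φ g⁻¹ := by
    rw [l1, scott_inv hhalf g]
    group
  exact scott_swapH hinj hhalf l2

/-- If `φ (g*c) = φ g * φ c` then `φ (g*c⁻¹) = φ g * φ c⁻¹`. -/
private lemma scott_invR (hinj : Function.Injective φ)
    (hhalf : ∀ x y : G, φ (x * y) = φ x * φ y ∨ φ (x * y) = φ y * φ x)
    {g c : G} (h : φ (g * c) = φ g * φ c) : φ (g * c⁻¹) = φ g * φ c⁻¹ :=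
  scott_swapH hinj hhalf (scott_invL hinj hhalf (scott_swapH hinj hhalf h))

/-- Key step: multiplicativity at `(g, c)`, `(c, x)`, `(g, x)` gives it at `(g, c*x)`. -/
private lemma scott_step (hinj : Function.Injective φ)
    (hhalf : ∀ x y : G, φ (x * y) = φ x * φ y ∨ φ (x * y) = φ y * φ x)
    {g c x : G} (hgc : φ (g * c) = φ g * φ c) (hcx : φ (c * x) = φ c * φ x)
    (hgx : φ (g * x) = φ g * φ x) :
    φ (g * (c * x)) = φ g * φ (c * x) := by
  rcases hhalf g (c * x) with H1 | H1
  · exact H1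
  rcases hhalf (g * c) x with H2 | H2
  · -- direct: φ(g*(c*x)) = φ((g*c)*x) = (φg*φc)*φx
    rw [← mul_assoc, H2, hgc, hcx, mul_assoc]
  -- H1 : φ(g*(c*x)) = φ(c*x)*φg ; H2 : φ((g*c)*x) = φx*φ(g*c)
  have hxg : φ (x * g) = φ x * φ g := scott_swapH hinj hhalf hgx
  have hcomm_route : φ (c * (x * g)) = φ (g * (c * x)) →
      φ (g * (c * x)) = φ g * φ (c * x) := by
    intro hp
    have e := hinj hp
    have hc' : g * (c * x) = (c * x) * g := by
      rw [← e, mul_assoc]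
    have himg := scott_comm hhalf hc'
    rw [H1]
    exact himg.symm
  rcases hhalf c (x * g) with P1 | P1
  · -- P1 : φ(c*(x*g)) = φc*φ(x*g) = φc*(φx*φg) = (φ(c*x))*φg
    apply hcomm_route
    rw [P1, hxg, H1, hcx, mul_assoc]
  · rcases hhalf (c * x) g with P2 | P2
    · -- P2 : φ((c*x)*g) = φ(c*x)*φg
      apply hcomm_route
      rw [← mul_assoc, P2, H1]
    · -- P1 : φ(c*(x*g)) = φ(x*g)*φc ; P2 : φ((c*x)*g) = φg*φ(c*x)
      have e : (φ x * φ g) * φ c = φ g * φ (c * x) := by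
        rw [← hxg, ← P1, ← mul_assoc]
        exact P2
      rw [← mul_assoc, H2, hgc, ← mul_assoc]
      exact e

end ScottHalf

theorem stmt_5 {G G' : Type*} [Group G] [Group G'] (φ : G → G')
    (hbij : Function.Bijective φ)
    (hhalf : ∀ x y : G, φ (x * y) = φ x * φ y ∨ φ (x * y) = φ y * φ x)
    (a b : G) (hab : φ (a * b) = φ a * φ b) :
    ∀ x ∈ Subgroup.closure ({a, b} : Set G), ∀ y ∈ Subgroup.closure ({a, b} : Set G),
      φ (x * y) = φ x * φ y := by
  obtain ⟨hinj, -⟩ := hbij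
  -- Level 2 : multiplicativity of (a, x) and (b, x) for all x in the closure
  have haa : φ (a * a) = φ a * φ a := (hhalf a a).elim id id
  have hbb : φ (b * b) = φ b * φ b := (hhalf b b).elim id id
  have hba : φ (b * a) = φ b * φ a := scott_swapH hinj hhalf hab
  have hpair : ∀ u v : G, (u = a ∨ u = b) → (v = a ∨ v = b) → φ (u * v) = φ u * φ v := by
    rintro u v (rfl | rfl) (rfl | rfl) <;> assumption
  have base_univ : ∀ x ∈ Subgroup.closure ({a, b} : Set G),
      φ (a * x) = φ a * φ x ∧ φ (b * x) = φ b * φ x := by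
    intro x hx
    induction hx using Subgroup.closure_induction_left with
    | one =>
      rw [mul_one, mul_one, scott_one hhalf, mul_one, mul_one]
      exact ⟨rfl, rfl⟩
    | mul_left c hc y hy ih =>
      have hc' : c = a ∨ c = b := by simpa using hc
      have hcy : φ (c * y) = φ c * φ y := by
        rcases hc' with rfl | rfl
        · exact ih.1
        · exact ih.2
      exact ⟨scott_step hinj hhalf (hpair a c (Or.inl rfl) hc') hcy ih.1,
             scott_step hinj hhalf (hpair b c (Or.inr rfl) hc') hcy ih.2⟩
    | inv_mul_cancel c hc y hy ih =>
      have hc' : c = a ∨ c = b := by simpa using hc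
      have hcy : φ (c * y) = φ c * φ y := by
        rcases hc' with rfl | rfl
        · exact ih.1
        · exact ih.2
      have hcy' : φ (c⁻¹ * y) = φ c⁻¹ * φ y := scott_invL hinj hhalf hcy
      exact ⟨scott_step hinj hhalf (scott_invR hinj hhalf (hpair a c (Or.inl rfl) hc')) hcy' ih.1,
             scott_step hinj hhalf (scott_invR hinj hhalf (hpair b c (Or.inr rfl) hc')) hcy' ih.2⟩
  -- Level 1 : main induction on y
  have main : ∀ y, y ∈ Subgroup.closure ({a, b} : Set G) →
      ∀ x ∈ Subgroup.closure ({a, b} : Set G), φ (x * y) = φ x * φ y := by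
    intro y hy
    induction hy using Subgroup.closure_induction with
    | mem z hz =>
      intro x hx
      have hz' : z = a ∨ z = b := by simpa using hz
      rcases hz' with rfl | rfl
      · exact scott_swapH hinj hhalf ((base_univ x hx).1)
      · exact scott_swapH hinj hhalf ((base_univ x hx).2)
    | one =>
      intro x hx
      rw [mul_one, scott_one hhalf, mul_one]
    | mul v w hv hw Qv Qw =>
      intro x hx
      have h2 : φ (x * v) = φ x * φ v := Qv x hx
      have h1 : φ ((x * v) * w) = φ (x * v) * φ w :=
        Qw (x * v) (mul_mem hx hv)
      have hvw : φ (v * w) = φ v * φ w := Qw v hv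
      calc φ (x * (v * w)) = φ ((x * v) * w) := by rw [mul_assoc]
        _ = (φ x * φ v) * φ w := by rw [h1, h2]
        _ = φ x * φ (v * w) := by rw [hvw, mul_assoc]
    | inv v hv Qv =>
      intro x hx
      have h1 : φ ((x * v⁻¹) * v) = φ (x * v⁻¹) * φ v :=
        Qv (x * v⁻¹) (mul_mem hx (inv_mem hv))
      rw [mul_assoc, inv_mul_cancel, mul_one] at h1
      rw [scott_inv hhalf v]
      exact eq_mul_inv_iff_mul_eq.mpr h1.symm
  exact fun x hx y hy => main y hy x hx
end

section
/- Let φ : G → G' be a half-isomorphism of groups and a, b ∈ G. If φ(ab) = φ(b)φ(a), then the restriction of φ to the subgroup ⟨a, b⟩ is an anti-isomorphism onto its image. -/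
namespace ScottHalf

variable {G G' : Type*} [Group G] [Group G'] {φ : G → G'}

section Basic

variable (hhalf : ∀ x y : G, φ (x * y) = φ x * φ y ∨ φ (x * y) = φ y * φ x)

include hhalf

lemma phi_one : φ 1 = (1 : G') := by
  rcases hhalf 1 1 with h | h <;>
  · rw [one_mul] at h
    have : φ 1 * (1 : G') = φ 1 * φ 1 := by rw [mul_one]; exact h
    exact (mul_left_cancel this).symm

lemma phi_sq (x : G) : φ (x * x) = φ x * φ x := by
  rcases hhalf x x with h | h <;> exact h

lemma phi_inv (x : G) : φ x⁻¹ = (φ x)⁻¹ := by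
  have h1 : φ (x * x⁻¹) = 1 := by rw [mul_inv_cancel, phi_one hhalf]
  rcases hhalf x x⁻¹ with h | h
  · rw [h1] at h; exact eq_inv_of_mul_eq_one_right h.symm
  · rw [h1] at h; exact eq_inv_of_mul_eq_one_left h.symm

lemma comm_aux (x y : G) (hc : x * y = y * x) (hxy : φ (x * y) = φ x * φ y) :
    φ x * φ y = φ y * φ x := by
  have hyy := phi_sq hhalf y
  have step1 : φ x * φ y = φ y * φ x ∨ φ (x * (y * y)) = φ x * (φ y * φ y) := by
    have hassoc : x * (y * y) = x * y * y := (mul_assoc _ _ _).symm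
    rcases hhalf x (y * y) with h1 | h1 <;> rcases hhalf (x * y) y with h2 | h2
    · right; rw [hyy] at h1; exact h1
    · left
      rw [hyy] at h1
      rw [hxy] at h2
      rw [hassoc] at h1
      have h3 : φ x * (φ y * φ y) = φ y * (φ x * φ y) := h1.symm.trans h2
      have h4 : (φ x * φ y) * φ y = (φ y * φ x) * φ y := by
        simpa [mul_assoc] using h3
      exact mul_right_cancel h4
    · right
      rw [hxy] at h2
      rw [hassoc]
      rw [h2]; simp [mul_assoc]
    · left
      rw [hyy] at h1
      rw [hxy] at h2
      rw [hassoc] at h1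
      have h3 : φ y * (φ y * φ x) = φ y * (φ x * φ y) := by
        have := h1.symm.trans h2
        simpa [mul_assoc] using this
      exact (mul_left_cancel h3).symm
  rcases step1 with done | e
  · exact done
  have hel : (x * y) * (x * y) = x * (x * (y * y)) := by
    calc (x * y) * (x * y) = x * ((y * x) * y) := by simp [mul_assoc]
    _ = x * ((x * y) * y) := by rw [← hc]
    _ = x * (x * (y * y)) := by simp [mul_assoc]
  have key : φ (x * (x * (y * y))) = (φ x * φ y) * (φ x * φ y) := by
    rw [← hel, phi_sq hhalf, hxy]
  rcases hhalf x (x * (y * y)) with h3 | h3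
  · rw [e] at h3
    have h4 := key.symm.trans h3
    have h5 : φ y * (φ x * φ y) = φ x * (φ y * φ y) := by
      apply mul_left_cancel (a := φ x)
      simpa [mul_assoc] using h4
    have h6 : (φ y * φ x) * φ y = (φ x * φ y) * φ y := by
      simpa [mul_assoc] using h5
    exact (mul_right_cancel h6).symm
  · rw [e] at h3
    have h4 := key.symm.trans h3
    have h5 : φ y * (φ x * φ y) = φ y * (φ y * φ x) := by
      apply mul_left_cancel (a := φ x)
      simpa [mul_assoc] using h4
    exact mul_left_cancel h5

lemma comm_lemma (x y : G) (hc : x * y = y * x) : φ x * φ y = φ y * φ x := by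
  rcases hhalf x y with h | h
  · exact comm_aux hhalf x y hc h
  · have h' : φ (y * x) = φ y * φ x := by rw [← hc]; exact h
    exact (comm_aux hhalf y x hc.symm h').symm

end Basic

section Swap

variable (hinj : Function.Injective φ)
  (hhalf : ∀ x y : G, φ (x * y) = φ x * φ y ∨ φ (x * y) = φ y * φ x)

include hinj hhalf

lemma skew_swap {u v : G} (h : φ (u * v) = φ v * φ u) : φ (v * u) = φ u * φ v := by
  rcases hhalf v u with h2 | h2
  · have hc : v * u = u * v := hinj (h2.trans h.symm)
    rw [h2]
    exact comm_lemma hhalf v u hc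
  · exact h2

lemma hom_swap {u v : G} (h : φ (u * v) = φ u * φ v) : φ (v * u) = φ v * φ u := by
  rcases hhalf v u with h2 | h2
  · exact h2
  · have hc : v * u = u * v := hinj (h2.trans h.symm)
    rw [h2]
    exact comm_lemma hhalf u v hc.symm

lemma skew_inv_right {u v : G} (h : φ (u * v) = φ v * φ u) :
    φ (u * v⁻¹) = φ v⁻¹ * φ u := by
  have hv : φ v⁻¹ = (φ v)⁻¹ := phi_inv hhalf v
  rw [hv]
  have he : u * v⁻¹ * v = u := by simp
  rcases hhalf (u * v⁻¹) v with h1 | h1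
  · -- φ u = φ (u * v⁻¹) * φ v
    rw [he] at h1
    have e : φ (u * v⁻¹) = φ u * (φ v)⁻¹ := eq_mul_inv_of_mul_eq h1.symm
    have he2 : u * v⁻¹ * (v * v) = u * v := by
      simp [mul_assoc]
    have hvv := phi_sq hhalf v
    have hcomm : φ v * φ u = φ u * φ v := by
      rcases hhalf (u * v⁻¹) (v * v) with h2 | h2
      · rw [he2, h, hvv, e] at h2
        rw [h2]; group
      · rw [he2, h, hvv, e] at h2
        -- h2 : φ v * φ u = φ v * φ v * (φ u * (φ v)⁻¹)
        have h3 : φ u = φ v * (φ u * (φ v)⁻¹) := by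
          apply mul_left_cancel (a := φ v)
          rw [← mul_assoc]; simpa [mul_assoc] using h2
        have h3' : (φ v * φ u) * (φ v)⁻¹ = φ u := by
          rw [mul_assoc]; exact h3.symm
        exact mul_inv_eq_iff_eq_mul.mp h3'
    rw [e]
    have hcommute : Commute (φ v) (φ u) := hcomm
    exact hcommute.inv_left.eq.symm
  · rw [he] at h1
    exact eq_inv_mul_of_mul_eq h1.symm

lemma skew_inv_left {u v : G} (h : φ (u * v) = φ v * φ u) :
    φ (u⁻¹ * v) = φ v * φ u⁻¹ := by
  have hu : φ u⁻¹ = (φ u)⁻¹ := phi_inv hhalf u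
  rw [hu]
  have he : u * (u⁻¹ * v) = v := by simp
  rcases hhalf u (u⁻¹ * v) with h1 | h1
  · rw [he] at h1
    have e : φ (u⁻¹ * v) = (φ u)⁻¹ * φ v := eq_inv_mul_of_mul_eq h1.symm
    have he2 : (u * u) * (u⁻¹ * v) = u * v := by
      simp [mul_assoc]
    have huu := phi_sq hhalf u
    have hcomm : φ u * φ v = φ v * φ u := by
      rcases hhalf (u * u) (u⁻¹ * v) with h2 | h2
      · rw [he2, h, huu, e] at h2
        -- h2 : φ v * φ u = φ u * φ u * ((φ u)⁻¹ * φ v)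
        have : φ v * φ u = φ u * φ v := by rw [h2]; group
        exact this.symm
      · rw [he2, h, huu, e] at h2
        -- h2 : φ v * φ u = (φ u)⁻¹ * φ v * (φ u * φ u)
        have h3 : φ u * (φ v * φ u) = φ v * (φ u * φ u) := by
          rw [h2]; group
        have h4 : (φ u * φ v) * φ u = (φ v * φ u) * φ u := by
          simpa [mul_assoc] using h3
        exact mul_right_cancel h4
    rw [e]
    have hcommute : Commute (φ u) (φ v) := hcomm
    exact hcommute.inv_left.eq
  · rw [he] at h1
    exact eq_mul_inv_of_mul_eq h1.symm

end Swap

def IsLetter (a b g : G) : Prop := g = a ∨ g = b ∨ g = a⁻¹ ∨ g = b⁻¹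

section Main

variable (hinj : Function.Injective φ)
  (hhalf : ∀ x y : G, φ (x * y) = φ x * φ y ∨ φ (x * y) = φ y * φ x)
  {a b : G} (hab : φ (a * b) = φ b * φ a)

omit hinj in
include hhalf in
lemma skew_self_inv (x : G) : φ (x * x⁻¹) = φ x⁻¹ * φ x := by
  rw [mul_inv_cancel, phi_one hhalf, phi_inv hhalf, inv_mul_cancel]

omit hinj in
include hhalf in
lemma skew_inv_self (x : G) : φ (x⁻¹ * x) = φ x * φ x⁻¹ := by
  rw [inv_mul_cancel, phi_one hhalf, phi_inv hhalf, mul_inv_cancel]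

include hinj hhalf hab

lemma letters_skew {g h : G} (hg : IsLetter a b g) (hh : IsLetter a b h) :
    φ (g * h) = φ h * φ g := by
  have sab := hab
  have sba := skew_swap hinj hhalf sab
  have s_ainv_b := skew_inv_left hinj hhalf sab
  have s_a_binv := skew_inv_right hinj hhalf sab
  have s_ainv_binv := skew_inv_right hinj hhalf s_ainv_b
  have s_b_ainv := skew_swap hinj hhalf s_ainv_b
  have s_binv_a := skew_inv_left hinj hhalf sba
  have s_binv_ainv := skew_inv_right hinj hhalf s_binv_a
  rcases hg with rfl | rfl | rfl | rfl <;> rcases hh with rfl | rfl | rfl | rfl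
  · exact phi_sq hhalf _
  · exact sab
  · exact skew_self_inv hhalf _
  · exact s_a_binv
  · exact sba
  · exact phi_sq hhalf _
  · exact s_b_ainv
  · exact skew_self_inv hhalf _
  · exact skew_inv_self hhalf _
  · exact s_ainv_b
  · exact phi_sq hhalf _
  · exact s_ainv_binv
  · exact s_binv_a
  · exact skew_inv_self hhalf _
  · exact s_binv_ainv
  · exact phi_sq hhalf _

lemma letter_list : ∀ (l : List G), (∀ y ∈ l, IsLetter a b y) → ∀ g, IsLetter a b g →
    φ (g * l.prod) = φ l.prod * φ g := by
  intro l
  induction l with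
  | nil => intro _ g _; simp [phi_one hhalf]
  | cons h t ih =>
    intro hl g hg
    have hht : IsLetter a b h := hl h List.mem_cons_self
    have htl : ∀ y ∈ t, IsLetter a b y := fun y hy => hl y (List.mem_cons_of_mem _ hy)
    have sht : φ (h * t.prod) = φ t.prod * φ h := ih htl h hht
    have sgt : φ (g * t.prod) = φ t.prod * φ g := ih htl g hg
    have stg : φ (t.prod * g) = φ g * φ t.prod := skew_swap hinj hhalf sgt
    have sgh : φ (g * h) = φ h * φ g := letters_skew hinj hhalf hab hg hht
    rw [List.prod_cons]
    rcases hhalf g (h * t.prod) with e1 | e1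
    case inr => exact e1
    rcases hhalf (g * h) t.prod with e2 | e2
    case inr =>
      rw [← mul_assoc, e2, sgh, sht, mul_assoc]
    have star : φ g * (φ t.prod * φ h) = (φ h * φ g) * φ t.prod := by
      have h0 : φ g * φ (h * t.prod) = φ (g * h) * φ t.prod := by
        rw [← e1, ← e2, mul_assoc]
      rw [sht, sgh] at h0
      exact h0
    by_cases hcma : φ g * (φ t.prod * φ h) = (φ t.prod * φ h) * φ g
    · rw [e1, sht]
      exact hcma
    · exfalso
      apply hcma
      have hswap := hom_swap hinj hhalf e1
      rw [mul_assoc] at hswap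
      rcases hhalf h (t.prod * g) with e3 | e3
      · rw [e3, stg] at hswap
        rw [sht] at hswap
        calc φ g * (φ t.prod * φ h) = (φ h * φ g) * φ t.prod := star
        _ = φ h * (φ g * φ t.prod) := mul_assoc _ _ _
        _ = (φ t.prod * φ h) * φ g := hswap
      · rw [e3, stg] at hswap
        rw [sht] at hswap
        calc φ g * (φ t.prod * φ h) = (φ g * φ t.prod) * φ h := (mul_assoc _ _ _).symm
        _ = (φ t.prod * φ h) * φ g := hswap

lemma word_word : ∀ (l₁ : List G), (∀ y ∈ l₁, IsLetter a b y) →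
    ∀ (l₂ : List G), (∀ y ∈ l₂, IsLetter a b y) →
    φ (l₁.prod * l₂.prod) = φ l₂.prod * φ l₁.prod := by
  intro l₁
  induction l₁ with
  | nil => intro _ l₂ _; simp [phi_one hhalf]
  | cons g t ih =>
    intro hl₁ l₂ hl₂
    have hg : IsLetter a b g := hl₁ g List.mem_cons_self
    have ht : ∀ y ∈ t, IsLetter a b y := fun y hy => hl₁ y (List.mem_cons_of_mem _ hy)
    have happ : ∀ y ∈ t ++ l₂, IsLetter a b y := by
      intro y hy
      rcases List.mem_append.mp hy with hy | hy
      exacts [ht y hy, hl₂ y hy]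
    have h1 := letter_list hinj hhalf hab (t ++ l₂) happ g hg
    rw [List.prod_append] at h1
    have h2 := ih ht l₂ hl₂
    have h3 := letter_list hinj hhalf hab t ht g hg
    rw [List.prod_cons, mul_assoc, h1, h2, mul_assoc, h3]

end Main

end ScottHalf

theorem stmt_6 {G G' : Type*} [Group G] [Group G'] (φ : G → G')
    (hbij : Function.Bijective φ)
    (hhalf : ∀ x y : G, φ (x * y) = φ x * φ y ∨ φ (x * y) = φ y * φ x)
    (a b : G) (hab : φ (a * b) = φ b * φ a) :
    ∀ x ∈ Subgroup.closure ({a, b} : Set G), ∀ y ∈ Subgroup.closure ({a, b} : Set G),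
      φ (x * y) = φ y * φ x := by
  intro x hx y hy
  have hinj := hbij.injective
  have letters : ∀ z : G, z ∈ Subgroup.closure ({a, b} : Set G) →
      ∃ l : List G, (∀ w ∈ l, ScottHalf.IsLetter a b w) ∧ l.prod = z := by
    intro z hz
    have hz' : z ∈ Submonoid.closure (({a, b} : Set G) ∪ ({a, b} : Set G)⁻¹) := by
      rw [← Subgroup.closure_toSubmonoid]
      exact hz
    obtain ⟨l, hl, hprod⟩ := Submonoid.exists_list_of_mem_closure hz'
    refine ⟨l, ?_, hprod⟩
    intro w hw
    rcases hl w hw with hw' | hw'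
    · simp only [Set.mem_insert_iff, Set.mem_singleton_iff] at hw'
      rcases hw' with rfl | rfl
      · exact Or.inl rfl
      · exact Or.inr (Or.inl rfl)
    · simp only [Set.mem_inv, Set.mem_insert_iff, Set.mem_singleton_iff] at hw'
      rcases hw' with h | h
      · exact Or.inr (Or.inr (Or.inl (inv_eq_iff_eq_inv.mp h)))
      · exact Or.inr (Or.inr (Or.inr (inv_eq_iff_eq_inv.mp h)))
  obtain ⟨l₁, hl₁, rfl⟩ := letters x hx
  obtain ⟨l₂, hl₂, rfl⟩ := letters y hy
  exact ScottHalf.word_word hinj hhalf hab l₁ hl₁ l₂ hl₂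
end

section
/- Let φ : G → G' be a half-isomorphism of groups. Then B = {a ∈ G : φ(ax) = φ(x)φ(a) for all x ∈ G} is a subgroup of G. -/
section AntiMulSubgroup

variable {G G' : Type*} [Group G] [Group G']

theorem map_one_of_half_mul {φ : G → G'}
    (hhalf : ∀ x y : G, φ (x * y) = φ x * φ y ∨ φ (x * y) = φ y * φ x) : φ 1 = 1 := by
  have h := hhalf 1 1
  rw [or_self, mul_one] at h
  exact mul_eq_left.mp h.symm

def antiMulSubgroup (φ : G → G') (h1 : φ 1 = 1) : Subgroup G where
  carrier := {a | ∀ x, φ (a * x) = φ x * φ a}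
  one_mem' x := by simp [h1]
  mul_mem' {a b} ha hb x := by
    rw [mul_assoc, ha, hb, ha b, mul_assoc]
  inv_mem' {a} ha x := by
    have hinv : φ a⁻¹ = (φ a)⁻¹ := by
      have h := ha a⁻¹
      rw [mul_inv_cancel, h1] at h
      exact eq_inv_of_mul_eq_one_left h.symm
    calc φ (a⁻¹ * x) = φ (a * (a⁻¹ * x)) * (φ a)⁻¹ := by rw [ha, mul_inv_cancel_right]
      _ = φ x * φ a⁻¹ := by rw [mul_inv_cancel_left, hinv]

end AntiMulSubgroup

theorem stmt_9_general {G G' : Type*} [Group G] [Group G'] (φ : G → G')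
    (hhalf : ∀ x y : G, φ (x * y) = φ x * φ y ∨ φ (x * y) = φ y * φ x) :
    ∃ B : Subgroup G, (B : Set G) = {a : G | ∀ x : G, φ (a * x) = φ x * φ a} :=
  ⟨antiMulSubgroup φ (map_one_of_half_mul hhalf), rfl⟩

theorem stmt_9 {G G' : Type*} [Group G] [Group G'] (φ : G → G')
    (hbij : Function.Bijective φ)
    (hhalf : ∀ x y : G, φ (x * y) = φ x * φ y ∨ φ (x * y) = φ y * φ x) :
    ∃ B : Subgroup G, (B : Set G) = {a : G | ∀ x : G, φ (a * x) = φ x * φ a} :=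
  stmt_9_general φ hhalf
end

section
/- Let φ : G → G' be a half-homomorphism of groups (not necessarily bijective). Then Ker(φ) = {a ∈ G : φ(a) = 1} is a subgroup of G. -/
theorem stmt_12 {G G' : Type*} [Group G] [Group G'] (φ : G → G')
    (hhalf : ∀ x y : G, φ (x * y) = φ x * φ y ∨ φ (x * y) = φ y * φ x) :
    ∃ K : Subgroup G, (K : Set G) = {a : G | φ a = 1} := by
  have hone : φ 1 = 1 := by
    have h : φ 1 = φ 1 * φ 1 := by simpa using (hhalf 1 1).elim id id
    exact left_eq_mul.mp h
  refine ⟨{ carrier := {a : G | φ a = 1}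
            mul_mem' := ?_
            one_mem' := hone
            inv_mem' := ?_ }, rfl⟩
  · intro a b ha hb
    simp only [Set.mem_setOf_eq] at ha hb ⊢
    rcases hhalf a b with h | h <;> rw [h, ha, hb, one_mul]
  · intro a ha
    have := hhalf a a⁻¹
    simp only [mul_inv_cancel, hone, Set.mem_setOf_eq] at *
    rcases this with h | h
    · rw [ha, one_mul] at h; exact h.symm
    · rw [ha, mul_one] at h; exact h.symm
end
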